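/- Fix 1 ≤ p ≤ ∞. Let F : ℝ × ℝ³ → ℂ be measurable and define (ZF)(t,x) := ∫_{−∞}^{t} ∫_{ℝ³} 𝟙_{\{|x−y| ≥ t−s\}} F(s,y)/(4π|x−y|) dy ds, which is the Duhamel term ∫_{s<t} cos((t−s)√(−Δ)) (−Δ)^{−1} F(s) ds for the free wave equation. Then for every x ∈ ℝ³, ‖(ZF)(·,x)‖_{L^p_t(ℝ)} ≤ (1/4π) ∫_{ℝ³} ‖F(·,y)‖_{L^p_t(ℝ)} dy; that is, ‖ZF‖_{L^∞_x L^p_t} ≤ (1/4π) ‖F‖_{L¹_x L^p_t}. -/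

import Mathlib

/-!
Substituting `u = t - s`, `|ZF(t,x)|` is bounded by `∫_y ∫_u w(|x-y|, u) |F(t-u, y)| du dy`
with `w(r,u) = 𝟙_{0<u≤r}/(4πr)`, a superposition of time translates of `|F(·,y)|`.
Minkowski's integral inequality moves the `L^p_t` norm inside, translation invariance turns the
norm of each translate into `‖F(·,y)‖_{L^p}`, and `∫ w(r,u) du ≤ 1/(4π)`: the length `r` of the
retarded-time interval cancels the `1/r` of the Newtonian kernel. For `p = ∞` the same bound
holds for every `t` directly.

Minkowski's integral inequality is proved by Hölder duality,
`‖ψ‖_p^p ≤ ∫ ψ^{p-1} ∫_b f_b ≤ (∫_b ‖f_b‖_p) ‖ψ‖_p^{p-1}`, which can be divided out only when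
`‖ψ‖_p < ∞`; so it is applied to truncations `ψ_n ≤ ∫_b f_b` of finite norm, and Fatou's lemma
passes to the limit.
-/

set_option autoImplicit false

open MeasureTheory ENNReal Real

noncomputable section

/-- `ℝ³` as a Euclidean space. -/
abbrev R3 : Type := EuclideanSpace ℝ (Fin 3)

/-- The Duhamel term `∫_{s<t} cos((t−s)√(−Δ)) (−Δ)^{−1} F(s) ds` for the free wave
equation: `(ZF)(t,x) = ∫_{s<t} ∫_{ℝ³} 𝟙_{|x−y| ≥ t−s} F(s,y)/(4π|x−y|) dy ds`. -/
def cosDuhamel (F : ℝ → R3 → ℂ) (t : ℝ) (x : R3) : ℂ :=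
  ∫ s in Set.Iio t, ∫ y : R3,
    if t - s ≤ ‖x - y‖ then (4 * π * ‖x - y‖)⁻¹ • F s y else 0

namespace ENNReal

lemma rpow_le_of_le_mul_rpow {p q : ℝ} (hpq : p.HolderConjugate q) {S J : ℝ≥0∞}
    (hS : S ≠ ∞) (h : S ≤ J * S ^ (1 / q)) : S ^ (1 / p) ≤ J := by
  rcases eq_or_ne S 0 with rfl | hS0
  · simp [hpq.pos]
  have hsplit : S ^ (1 / p) * S ^ (1 / q) = S := by
    rw [← ENNReal.rpow_add _ _ hS0 hS, one_div, one_div, hpq.inv_add_inv_eq_one, rpow_one]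
  have hq : 0 < 1 / q := one_div_pos.2 hpq.symm.pos
  refine (ENNReal.mul_le_mul_iff_left (ENNReal.rpow_pos (pos_iff_ne_zero.2 hS0) hS).ne'
    (ENNReal.rpow_ne_top_of_nonneg hq.le hS)).1 ?_
  rwa [hsplit]

end ENNReal

namespace MeasureTheory

variable {α β : Type*} [MeasurableSpace α] [MeasurableSpace β] {μ : Measure α} {ν : Measure β}

lemma eLpNorm_ennreal_eq_lintegral_rpow_toReal {p : ℝ≥0∞} (hp0 : p ≠ 0) (hp_top : p ≠ ∞)
    (g : α → ℝ≥0∞) : eLpNorm g p μ = (∫⁻ a, g a ^ p.toReal ∂μ) ^ (1 / p.toReal) := by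
  simp [eLpNorm_eq_lintegral_rpow_enorm_toReal hp0 hp_top]

lemma eLpNorm_le_lintegral_eLpNorm_of_le_lintegral [SFinite μ] [SFinite ν] {p : ℝ≥0∞}
    (hp : 1 < p) (hp_top : p ≠ ∞) {f : β → α → ℝ≥0∞} (hf : Measurable (Function.uncurry f))
    {ψ : α → ℝ≥0∞} (hψ : Measurable ψ) (hψf : ∀ a, ψ a ≤ ∫⁻ b, f b a ∂ν)
    (hψ_fin : eLpNorm ψ p μ ≠ ∞) :
    eLpNorm ψ p μ ≤ ∫⁻ b, eLpNorm (f b) p μ ∂ν := by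
  have hp0 : p ≠ 0 := (zero_lt_one.trans hp).ne'
  simp only [eLpNorm_ennreal_eq_lintegral_rpow_toReal hp0 hp_top] at hψ_fin ⊢
  set P := p.toReal
  have hP : 1 < P := by simpa using ENNReal.toReal_strict_mono hp_top hp
  have hPQ := Real.HolderConjugate.conjExponent hP
  set Q := P.conjExponent
  set S := ∫⁻ a, ψ a ^ P ∂μ
  have hS : S ≠ ∞ := by
    contrapose! hψ_fin
    rw [hψ_fin, ENNReal.top_rpow_of_pos (one_div_pos.2 hPQ.pos)]
  refine ENNReal.rpow_le_of_le_mul_rpow hPQ hS ?_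
  have hψ_pow : ∀ a, ψ a ^ P = ψ a ^ (P - 1) * ψ a := fun a => by
    simpa using ENNReal.rpow_add_of_nonneg (x := ψ a) _ _ (sub_nonneg.2 hP.le) zero_le_one
  have hψS : ∫⁻ a, (ψ a ^ (P - 1)) ^ Q ∂μ = S := by
    simp_rw [← ENNReal.rpow_mul, hPQ.sub_one_mul_conj]
    rfl
  calc S ≤ ∫⁻ a, ψ a ^ (P - 1) * ∫⁻ b, f b a ∂ν ∂μ :=
        lintegral_mono fun a => (hψ_pow a).trans_le (by gcongr; exact hψf a)
    _ = ∫⁻ a, ∫⁻ b, f b a * ψ a ^ (P - 1) ∂ν ∂μ := lintegral_congr fun a => by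
        rw [mul_comm, lintegral_mul_const _ hf.of_uncurry_right]
    _ = ∫⁻ b, ∫⁻ a, f b a * ψ a ^ (P - 1) ∂μ ∂ν := lintegral_lintegral_swap (by fun_prop)
    _ ≤ ∫⁻ b, (∫⁻ a, f b a ^ P ∂μ) ^ (1 / P) * S ^ (1 / Q) ∂ν := by
        refine lintegral_mono fun b => ?_
        rw [← hψS]
        exact ENNReal.lintegral_mul_le_Lp_mul_Lq μ hPQ hf.of_uncurry_left.aemeasurable
          (hψ.pow_const (P - 1)).aemeasurable
    _ = (∫⁻ b, (∫⁻ a, f b a ^ P ∂μ) ^ (1 / P) ∂ν) * S ^ (1 / Q) :=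
        lintegral_mul_const' _ _ (ENNReal.rpow_ne_top_of_nonneg (one_div_pos.2 hPQ.symm.pos).le hS)

def spanningTruncation (μ : Measure α) [SigmaFinite μ] (Φ : α → ℝ≥0∞) (n : ℕ) :
    α → ℝ≥0∞ :=
  (spanningSets μ n).indicator fun a => min (Φ a) n

section spanningTruncation

variable [SigmaFinite μ] {Φ : α → ℝ≥0∞}

lemma spanningTruncation_le (n : ℕ) (a : α) : spanningTruncation μ Φ n a ≤ Φ a :=
  Set.indicator_le_self' (fun _ _ => zero_le) a |>.trans (min_le_left _ _)

lemma measurable_spanningTruncation (hΦ : Measurable Φ) (n : ℕ) :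
    Measurable (spanningTruncation μ Φ n) :=
  (hΦ.min measurable_const).indicator (measurableSet_spanningSets μ n)

lemma eLpNorm_spanningTruncation_ne_top (n : ℕ) (p : ℝ≥0∞) :
    eLpNorm (spanningTruncation μ Φ n) p μ ≠ ∞ := by
  have hle : eLpNorm (spanningTruncation μ Φ n) p μ ≤
      eLpNorm ((spanningSets μ n).indicator fun _ => (n : ℝ≥0∞)) p μ :=
    eLpNorm_mono_enorm fun a => by
      simp only [enorm_eq_self]
      exact Set.indicator_le_indicator (min_le_right _ _)
  refine ne_top_of_le_ne_top ?_ (hle.trans (eLpNorm_indicator_const_le (n : ℝ≥0∞) p))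
  exact mul_ne_top (by simp) (rpow_ne_top_of_nonneg (by positivity)
    (measure_spanningSets_lt_top μ n).ne)

lemma tendsto_spanningTruncation (a : α) :
    Filter.Tendsto (fun n => spanningTruncation μ Φ n a) Filter.atTop (nhds (Φ a)) := by
  have hlim : Filter.Tendsto (fun n : ℕ => min (Φ a) n) Filter.atTop (nhds (min (Φ a) ∞)) :=
    tendsto_const_nhds.min ENNReal.tendsto_nat_nhds_top
  rw [min_top_right] at hlim
  refine hlim.congr' (Filter.eventually_atTop.2 ⟨spanningSetsIndex μ a, fun n hn => ?_⟩)
  exact (Set.indicator_of_mem (monotone_spanningSets μ hn (mem_spanningSetsIndex μ a))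
    fun a => min (Φ a) (n : ℝ≥0∞)).symm

end spanningTruncation

theorem eLpNorm_lintegral_le [SigmaFinite μ] [SFinite ν] {p : ℝ≥0∞} (hp : 1 ≤ p)
    (hp_top : p ≠ ∞) {f : β → α → ℝ≥0∞} (hf : Measurable (Function.uncurry f)) :
    eLpNorm (fun a => ∫⁻ b, f b a ∂ν) p μ ≤ ∫⁻ b, eLpNorm (f b) p μ ∂ν := by
  rcases hp.eq_or_lt with rfl | hp1
  · simp only [eLpNorm_one_eq_lintegral_enorm, enorm_eq_self]
    exact (lintegral_lintegral_swap (by fun_prop)).le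
  set Φ := fun a => ∫⁻ b, f b a ∂ν
  have hΦ : Measurable Φ := hf.lintegral_prod_left
  have hψ : ∀ n, eLpNorm (spanningTruncation μ Φ n) p μ ≤ ∫⁻ b, eLpNorm (f b) p μ ∂ν :=
    fun n => eLpNorm_le_lintegral_eLpNorm_of_le_lintegral hp1 hp_top hf
      (measurable_spanningTruncation hΦ n) (spanningTruncation_le n)
      (eLpNorm_spanningTruncation_ne_top n p)
  have hp0 : p ≠ 0 := (zero_lt_one.trans hp1).ne'
  have hP : 0 < p.toReal := ENNReal.toReal_pos hp0 hp_top
  simp only [eLpNorm_ennreal_eq_lintegral_rpow_toReal hp0 hp_top, one_div,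
    ENNReal.rpow_inv_le_iff hP] at hψ ⊢
  calc ∫⁻ a, Φ a ^ p.toReal ∂μ
      = ∫⁻ a, Filter.atTop.liminf (fun n => spanningTruncation μ Φ n a ^ p.toReal) ∂μ :=
        lintegral_congr fun a => ((ENNReal.continuous_rpow_const.tendsto _).comp
          (tendsto_spanningTruncation a)).liminf_eq.symm
    _ ≤ Filter.atTop.liminf fun n => ∫⁻ a, spanningTruncation μ Φ n a ^ p.toReal ∂μ :=
        lintegral_liminf_le fun n => (measurable_spanningTruncation hΦ n).pow_const _
    _ ≤ _ := Filter.liminf_le_of_frequently_le' (Filter.Frequently.of_forall hψ)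

end MeasureTheory

/-- The kernel of `cosDuhamel` in the variables `r = |x - y|` and `u = t - s`. -/
def duhamelWeight (r u : ℝ) : ℝ≥0∞ :=
  (Set.Ioc 0 r).indicator (fun _ => ENNReal.ofReal (4 * π * r)⁻¹) u

@[fun_prop]
lemma Measurable.duhamelWeight {γ : Type*} [MeasurableSpace γ] {f g : γ → ℝ}
    (hf : Measurable f) (hg : Measurable g) : Measurable fun c => duhamelWeight (f c) (g c) := by
  have hset : MeasurableSet {c | 0 < g c ∧ g c ≤ f c} :=
    (measurableSet_lt measurable_const hg).inter (measurableSet_le hg hf)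
  exact (Measurable.indicator (by fun_prop) hset :
    Measurable ({c | 0 < g c ∧ g c ≤ f c}.indicator fun c => ENNReal.ofReal (4 * π * f c)⁻¹))

lemma duhamelWeight_ne_top (r u : ℝ) : duhamelWeight r u ≠ ∞ := by
  unfold duhamelWeight
  exact ne_top_of_le_ne_top ofReal_ne_top (Set.indicator_le_self' (fun _ _ => zero_le) u)

lemma duhamelWeight_of_nonpos (r : ℝ) {u : ℝ} (hu : u ≤ 0) : duhamelWeight r u = 0 :=
  Set.indicator_of_notMem (fun hmem => hu.not_gt hmem.1) _

lemma lintegral_duhamelWeight_le (r : ℝ) :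
    ∫⁻ u, duhamelWeight r u ≤ (ENNReal.ofReal (4 * π))⁻¹ := by
  unfold duhamelWeight
  rw [lintegral_indicator_const measurableSet_Ioc, Real.volume_Ioc, sub_zero]
  rcases le_or_gt r 0 with hr | hr
  · simp [ENNReal.ofReal_of_nonpos hr]
  · rw [← ENNReal.ofReal_mul (by positivity), ← ENNReal.ofReal_inv_of_pos (by positivity)]
    exact ENNReal.ofReal_le_ofReal (le_of_eq (by field_simp))

lemma eLpNorm_const_mul_enorm_le {α E : Type*} [MeasurableSpace α] {μ : Measure α}
    [TopologicalSpace E] [ContinuousENorm E] {c : ℝ≥0∞} (hc : c ≠ ∞) (g : α → E) (p : ℝ≥0∞) :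
    eLpNorm (fun a => c * ‖g a‖ₑ) p μ ≤ c * eLpNorm g p μ := by
  have h := eLpNorm_le_nnreal_smul_eLpNorm_of_ae_le_mul' (μ := μ)
    (f := fun a => c * ‖g a‖ₑ) (g := g) (c := c.toNNReal)
    (Filter.Eventually.of_forall fun a => by rw [enorm_eq_self, coe_toNNReal hc]) p
  rwa [ENNReal.smul_def, smul_eq_mul, coe_toNNReal hc] at h

lemma lintegral_mul_enorm_sub_le {E : Type*} [NormedAddCommGroup E] {w : ℝ → ℝ≥0∞}
    (hw : Measurable w) (g : ℝ → E) (t : ℝ) :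
    ∫⁻ u, w u * ‖g (t - u)‖ₑ ≤ (∫⁻ u, w u) * eLpNorm g ∞ volume := by
  have hg : ∀ᵐ u, ‖g (t - u)‖ₑ ≤ eLpNorm g ∞ volume :=
    (Measure.measurePreserving_sub_left volume t).quasiMeasurePreserving.tendsto_ae.eventually
      ae_le_eLpNormEssSup
  calc ∫⁻ u, w u * ‖g (t - u)‖ₑ ≤ ∫⁻ u, w u * eLpNorm g ∞ volume :=
        lintegral_mono_ae (hg.mono fun u hu => by gcongr)
    _ = (∫⁻ u, w u) * eLpNorm g ∞ volume := lintegral_mul_const _ hw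

lemma enorm_cosDuhamel_le {F : ℝ → R3 → ℂ} (hF : Measurable (Function.uncurry F)) (t : ℝ)
    (x : R3) : ‖cosDuhamel F t x‖ₑ ≤
      ∫⁻ z : R3 × ℝ, duhamelWeight ‖x - z.1‖ z.2 * ‖F (t - z.2) z.1‖ₑ := by
  have hintegrand : ∀ s < t, ∀ y,
      ‖if t - s ≤ ‖x - y‖ then (4 * π * ‖x - y‖)⁻¹ • F s y else 0‖ₑ =
        duhamelWeight ‖x - y‖ (t - s) * ‖F s y‖ₑ := fun s hs y => by
    unfold duhamelWeight
    by_cases h : t - s ≤ ‖x - y‖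
    · rw [if_pos h, Set.indicator_of_mem (s := Set.Ioc 0 ‖x - y‖) ⟨sub_pos.2 hs, h⟩, enorm_smul,
        Real.enorm_eq_ofReal (by positivity)]
    · rw [if_neg h, Set.indicator_of_notMem (fun hmem => h hmem.2), enorm_zero, zero_mul]
  calc ‖cosDuhamel F t x‖ₑ
      ≤ ∫⁻ s in Set.Iio t, ∫⁻ y,
          ‖if t - s ≤ ‖x - y‖ then (4 * π * ‖x - y‖)⁻¹ • F s y else 0‖ₑ :=
        (enorm_integral_le_lintegral_enorm _).trans
          (lintegral_mono fun s => enorm_integral_le_lintegral_enorm _)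
    _ = ∫⁻ s in Set.Iio t, ∫⁻ y, duhamelWeight ‖x - y‖ (t - s) * ‖F s y‖ₑ :=
        setLIntegral_congr_fun measurableSet_Iio fun s hs =>
          lintegral_congr (hintegrand s hs)
    _ = ∫⁻ s, ∫⁻ y, duhamelWeight ‖x - y‖ (t - s) * ‖F s y‖ₑ := by
        refine setLIntegral_eq_of_support_subset fun s hs => ?_
        by_contra hst
        refine hs ((lintegral_congr fun y => ?_).trans lintegral_zero)
        rw [duhamelWeight_of_nonpos _ (sub_nonpos.2 (not_lt.1 hst)), zero_mul]
    _ = ∫⁻ y, ∫⁻ s, duhamelWeight ‖x - y‖ (t - s) * ‖F s y‖ₑ :=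
        lintegral_lintegral_swap (by fun_prop)
    _ = ∫⁻ y, ∫⁻ u, duhamelWeight ‖x - y‖ u * ‖F (t - u) y‖ₑ := lintegral_congr fun y => by
        simpa using (lintegral_sub_left_eq_self (μ := volume)
          (fun u => duhamelWeight ‖x - y‖ u * ‖F (t - u) y‖ₑ) t)
    _ = ∫⁻ z : R3 × ℝ, duhamelWeight ‖x - z.1‖ z.2 * ‖F (t - z.2) z.1‖ₑ :=
        (lintegral_prod (μ := volume) (ν := volume)
          (fun z : R3 × ℝ => duhamelWeight ‖x - z.1‖ z.2 * ‖F (t - z.2) z.1‖ₑ) (by fun_prop)).symm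

lemma lintegral_lintegral_duhamelWeight_mul_le (x : R3) (N : R3 → ℝ≥0∞) :
    ∫⁻ y, (∫⁻ u, duhamelWeight ‖x - y‖ u) * N y ≤ (ENNReal.ofReal (4 * π))⁻¹ * ∫⁻ y, N y :=
  calc ∫⁻ y, (∫⁻ u, duhamelWeight ‖x - y‖ u) * N y
      ≤ ∫⁻ y, (ENNReal.ofReal (4 * π))⁻¹ * N y :=
        lintegral_mono fun y => by gcongr; exact lintegral_duhamelWeight_le _
    _ = (ENNReal.ofReal (4 * π))⁻¹ * ∫⁻ y, N y :=
        lintegral_const_mul' _ _ (ENNReal.inv_ne_top.2 (by positivity))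

lemma eLpNorm_top_cosDuhamel_le {F : ℝ → R3 → ℂ} (hF : Measurable (Function.uncurry F))
    (x : R3) : eLpNorm (fun t => cosDuhamel F t x) ∞ volume ≤
      (ENNReal.ofReal (4 * π))⁻¹ * ∫⁻ y : R3, eLpNorm (fun t => F t y) ∞ volume := by
  rw [eLpNorm_exponent_top]
  refine eLpNormEssSup_le_of_ae_enorm_bound (Filter.Eventually.of_forall fun t => ?_)
  calc ‖cosDuhamel F t x‖ₑ
      ≤ ∫⁻ z : R3 × ℝ, duhamelWeight ‖x - z.1‖ z.2 * ‖F (t - z.2) z.1‖ₑ :=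
        enorm_cosDuhamel_le hF t x
    _ ≤ ∫⁻ y, ∫⁻ u, duhamelWeight ‖x - y‖ u * ‖F (t - u) y‖ₑ := lintegral_prod_le _
    _ ≤ ∫⁻ y, (∫⁻ u, duhamelWeight ‖x - y‖ u) * eLpNorm (fun t => F t y) ∞ volume :=
        lintegral_mono fun y => lintegral_mul_enorm_sub_le (by fun_prop) _ t
    _ ≤ _ := lintegral_lintegral_duhamelWeight_mul_le x _

lemma eLpNorm_cosDuhamel_le_of_ne_top {p : ℝ≥0∞} (hp : 1 ≤ p) (hp_top : p ≠ ∞)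
    {F : ℝ → R3 → ℂ} (hF : Measurable (Function.uncurry F)) (x : R3) :
    eLpNorm (fun t => cosDuhamel F t x) p volume ≤
      (ENNReal.ofReal (4 * π))⁻¹ * ∫⁻ y : R3, eLpNorm (fun t => F t y) p volume := by
  have htranslate : ∀ z : R3 × ℝ, eLpNorm (fun t => F (t - z.2) z.1) p volume =
      eLpNorm (fun t => F t z.1) p volume := fun z =>
    eLpNorm_comp_measurePreserving (g := fun t => F t z.1)
      hF.of_uncurry_right.aestronglyMeasurable (measurePreserving_sub_right volume z.2)
  calc eLpNorm (fun t => cosDuhamel F t x) p volume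
      ≤ eLpNorm (fun t => ∫⁻ z : R3 × ℝ,
          duhamelWeight ‖x - z.1‖ z.2 * ‖F (t - z.2) z.1‖ₑ) p volume :=
        eLpNorm_mono_enorm fun t => (enorm_cosDuhamel_le hF t x).trans_eq (enorm_eq_self _).symm
    _ ≤ ∫⁻ z : R3 × ℝ, eLpNorm (fun t =>
          duhamelWeight ‖x - z.1‖ z.2 * ‖F (t - z.2) z.1‖ₑ) p volume :=
        eLpNorm_lintegral_le hp hp_top (by fun_prop)
    _ ≤ ∫⁻ z : R3 × ℝ, duhamelWeight ‖x - z.1‖ z.2 * eLpNorm (fun t => F t z.1) p volume :=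
        lintegral_mono fun z => (eLpNorm_const_mul_enorm_le (duhamelWeight_ne_top _ _) _ p).trans_eq
          (by rw [htranslate])
    _ ≤ ∫⁻ y, ∫⁻ u, duhamelWeight ‖x - y‖ u * eLpNorm (fun t => F t y) p volume :=
        lintegral_prod_le _
    _ = ∫⁻ y, (∫⁻ u, duhamelWeight ‖x - y‖ u) * eLpNorm (fun t => F t y) p volume :=
        lintegral_congr fun y => lintegral_mul_const _ (by fun_prop)
    _ ≤ _ := lintegral_lintegral_duhamelWeight_mul_le x _

theorem cos_duhamel_reversed_estimate (p : ℝ≥0∞) (hp : 1 ≤ p)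
    (F : ℝ → R3 → ℂ) (hF : Measurable (Function.uncurry F)) :
    (∀ x : R3,
      eLpNorm (fun t => cosDuhamel F t x) p volume ≤
        (ENNReal.ofReal (4 * π))⁻¹ * ∫⁻ y : R3, eLpNorm (fun t => F t y) p volume) ∧
    essSup (fun x : R3 => eLpNorm (fun t => cosDuhamel F t x) p volume) volume ≤
      (ENNReal.ofReal (4 * π))⁻¹ * ∫⁻ y : R3, eLpNorm (fun t => F t y) p volume := by
  have hpointwise : ∀ x : R3, eLpNorm (fun t => cosDuhamel F t x) p volume ≤
      (ENNReal.ofReal (4 * π))⁻¹ * ∫⁻ y : R3, eLpNorm (fun t => F t y) p volume := by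
    intro x
    rcases eq_or_ne p ∞ with rfl | hp_top
    · exact eLpNorm_top_cosDuhamel_le hF x
    · exact eLpNorm_cosDuhamel_le_of_ne_top hp hp_top hF x
  exact ⟨hpointwise, essSup_le_of_ae_le _ (Filter.Eventually.of_forall hpointwise)⟩
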